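/- arXiv:1910.08452 — 4 statements merged into one kernel-verified Lean document; each statement's English description precedes it below -/
import Mathlib

section
/- Suppose r ≥ 2, n ≥ 2, and p_{i,j} (1 ≤ i ≤ r, 1 ≤ j ≤ n) are distinct primes each exceeding 2^r + 1. For each i set q_i = p_{i,2}·p_{i,3}⋯p_{i,n}, and let t be the product of all the primes p_{i,j}. Assume: (i) 2·p_{i,1}·q_j − 1 is prime whenever i = 1, j = 1, or j = i; (ii) for every prime π and integer b ≥ 2 with σ(π^b) > 2^r, σ(π^b) does not divide 2^r·t; (iii) for every divisor d₁ of t with d₁ > 1 and every divisor d₂ of 2^{r−1}, the number 2·d₁·d₂ − 1 is composite unless it is one of the primes listed in (i). Then B(2^r·t) = r, i.e., the equation σ(x) = 2^r·t has exactly r solutions. -/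
open Nat Finset ArithmeticFunction
open scoped ArithmeticFunction.sigma

open Nat Finset ArithmeticFunction

lemma geom_split (y h : ℕ) :
    (∑ i ∈ Finset.range (h + h), y ^ i) =
      (∑ i ∈ Finset.range h, y ^ i) * (1 + y ^ h) := by
  rw [Finset.sum_range_add, mul_add, mul_one]
  congr 1
  rw [Finset.sum_mul]
  exact Finset.sum_congr rfl fun i _ => by rw [pow_add, mul_comm]

lemma sum_pows_mod_two {y h : ℕ} (hy : ¬ 2 ∣ y) :
    (∑ i ∈ Finset.range h, y ^ i) % 2 = h % 2 := by
  have h1 : ∀ i ∈ Finset.range h, y ^ i % 2 = 1 % 2 := by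
    intro i _
    have : Odd (y ^ i) := (Nat.odd_iff.2 (by omega)).pow
    rw [Nat.odd_iff] at this
    omega
  calc (∑ i ∈ Finset.range h, y ^ i) % 2
      = (∑ i ∈ Finset.range h, y ^ i % 2) % 2 := Finset.sum_nat_mod _ _ _
    _ = (∑ _i ∈ Finset.range h, 1 % 2) % 2 := by rw [Finset.sum_congr rfl h1]
    _ = h % 2 := by simp

lemma one_lt_sum_pows {y h : ℕ} (hy : 2 ≤ y) (hh : 2 ≤ h) :
    1 < ∑ i ∈ Finset.range h, y ^ i := by
  calc 1 < 1 + y := by omega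
  _ = ∑ i ∈ ({0, 1} : Finset ℕ), y ^ i := by
        rw [Finset.sum_pair (by omega : (0:ℕ) ≠ 1)]; simp
  _ ≤ ∑ i ∈ Finset.range h, y ^ i := by
        apply Finset.sum_le_sum_of_subset
        intro x hx; simp only [Finset.mem_insert, Finset.mem_singleton] at hx
        simp only [Finset.mem_range]; omega

/-- Nagell-type lemma: σ(p^b) is not a power of two for b ≥ 2. -/
lemma sigma_pow_ne_two_pow {p b a : ℕ} (hp : p.Prime) (hb : 2 ≤ b)
    (h : σ 1 (p ^ b) = 2 ^ a) : False := by
  rw [sigma_one_apply_prime_pow hp] at h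
  have hp2 : 2 ≤ p := hp.two_le
  rcases Nat.Prime.eq_two_or_odd' hp with rfl | hodd
  · -- p = 2 : sum is odd and > 1
    have hmod : (∑ k ∈ Finset.range (b + 1), 2 ^ k) % 2 = 1 := by
      rw [Finset.sum_range_succ']
      have h2 : 2 ∣ ∑ i ∈ Finset.range b, 2 ^ (i + 1) :=
        Finset.dvd_sum fun i _ => dvd_pow_self 2 (Nat.succ_ne_zero i)
      simp only [pow_zero]; omega
    have hgt : 1 < ∑ k ∈ Finset.range (b + 1), 2 ^ k := one_lt_sum_pows (by omega) (by omega)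
    have : a = 0 := by
      by_contra ha
      have : 2 ∣ 2 ^ a := dvd_pow_self 2 ha
      omega
    simp [this] at h; omega
  · have hy : ¬ 2 ∣ p := by rw [Nat.odd_iff] at hodd; omega
    rcases Nat.even_or_odd (b + 1) with he | ho
    · obtain ⟨h', hh'⟩ : ∃ h', b + 1 = h' + h' := ⟨(b+1)/2, by rcases he with ⟨c, hc⟩; omega⟩
      rw [hh', geom_split] at h
      have hh2 : 2 ≤ h' := by omega
      have hdvd : (1 + p ^ h') ∣ 2 ^ a := h ▸ Dvd.intro_left _ rfl
      rcases Nat.even_or_odd h' with hhe | hho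
      · obtain ⟨c, hc⟩ := hhe
        have h4 : p ^ h' % 4 = 1 := by
          rw [hc]
          have he2 : p ^ (c + c) = (p ^ c) ^ 2 := by ring
          rw [he2]
          obtain ⟨d, hd⟩ := hodd.pow (n := c)
          have : (p ^ c) ^ 2 = 4 * (d * d + d) + 1 := by rw [hd]; ring
          omega
        have hple : 2 ≤ p ^ h' := le_trans hp2 (Nat.le_self_pow (by omega) p)
        obtain ⟨c', hc', he'⟩ := (Nat.dvd_prime_pow Nat.prime_two).1 hdvd
        have hc1 : c' ≤ 1 := by
          by_contra hcb
          have : (2:ℕ) ^ 2 ∣ 2 ^ c' := pow_dvd_pow 2 (by omega)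
          have : (4:ℕ) ∣ 2 ^ c' := by norm_num at this ⊢; exact this
          omega
        have : (2:ℕ) ^ c' ≤ 2 ^ 1 := Nat.pow_le_pow_right (by omega) hc1
        omega
      · have hdvd2 : (∑ i ∈ Finset.range h', p ^ i) ∣ 2 ^ a := h ▸ Dvd.intro _ rfl
        have hm : (∑ i ∈ Finset.range h', p ^ i) % 2 = 1 := by
          rw [sum_pows_mod_two hy]; rw [Nat.odd_iff] at hho; omega
        have hgt : 1 < ∑ i ∈ Finset.range h', p ^ i := one_lt_sum_pows hp2 hh2
        obtain ⟨c', hc', he'⟩ := (Nat.dvd_prime_pow Nat.prime_two).1 hdvd2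
        have : c' = 0 := by
          by_contra hc0
          have : 2 ∣ 2 ^ c' := dvd_pow_self 2 hc0
          omega
        simp [this] at he'; omega
    · have hm : (∑ i ∈ Finset.range (b+1), p ^ i) % 2 = 1 := by
        rw [sum_pows_mod_two hy]; rw [Nat.odd_iff] at ho; omega
      have hgt : 1 < ∑ i ∈ Finset.range (b+1), p ^ i := one_lt_sum_pows hp2 (by omega)
      have : a = 0 := by
        by_contra ha
        have : 2 ∣ 2 ^ a := dvd_pow_self 2 ha
        omega
      simp [this] at h; omega
open Nat Finset ArithmeticFunction

lemma coprime_prod_primes {ι : Type*} {s : Finset ι} {f : ι → ℕ} {c : ℕ}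
    (hc : c.Prime) (hf : ∀ i ∈ s, (f i).Prime) (hne : ∀ i ∈ s, f i ≠ c) :
    Nat.Coprime c (∏ i ∈ s, f i) := by
  rw [Nat.Prime.coprime_iff_not_dvd hc]
  intro hdvd
  obtain ⟨i, hi, hdi⟩ := (Nat.Prime.prime hc).exists_mem_finset_dvd hdvd
  exact hne i hi (((Nat.prime_dvd_prime_iff_eq hc (hf i hi)).1 hdi).symm)

lemma sigma_prod_primes {ι : Type*} (s : Finset ι) (f : ι → ℕ)
    (hf : ∀ i ∈ s, (f i).Prime) (hinj : ∀ i ∈ s, ∀ j ∈ s, f i = f j → i = j) :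
    σ 1 (∏ i ∈ s, f i) = ∏ i ∈ s, (f i + 1) := by
  induction s using Finset.cons_induction with
  | empty => simp [sigma_one_apply]
  | cons a s ha ih =>
    rw [Finset.prod_cons, Finset.prod_cons]
    have hcop : Nat.Coprime (f a) (∏ i ∈ s, f i) := by
      apply coprime_prod_primes (hf a (Finset.mem_cons_self a s))
        (fun i hi => hf i (Finset.mem_cons_of_mem hi))
      intro i hi hfi
      exact ha (by
        have := hinj i (Finset.mem_cons_of_mem hi) a (Finset.mem_cons_self a s) hfi
        rwa [← this])
    rw [isMultiplicative_sigma.map_mul_of_coprime hcop,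
      ih (fun i hi => hf i (Finset.mem_cons_of_mem hi))
        (fun i hi j hj => hinj i (Finset.mem_cons_of_mem hi) j (Finset.mem_cons_of_mem hj))]
    congr 1
    have hp := hf a (Finset.mem_cons_self a s)
    rw [sigma_one_apply, hp.divisors, Finset.sum_pair hp.one_lt.ne]
    omega

lemma squarefree_prod_primes {ι : Type*} (s : Finset ι) (f : ι → ℕ)
    (hf : ∀ i ∈ s, (f i).Prime) (hinj : ∀ i ∈ s, ∀ j ∈ s, f i = f j → i = j) :
    Squarefree (∏ i ∈ s, f i) := by
  induction s using Finset.cons_induction with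
  | empty => simpa using squarefree_one
  | cons a s ha ih =>
    rw [Finset.prod_cons]
    have hcop : Nat.Coprime (f a) (∏ i ∈ s, f i) := by
      apply coprime_prod_primes (hf a (Finset.mem_cons_self a s))
        (fun i hi => hf i (Finset.mem_cons_of_mem hi))
      intro i hi hfi
      exact ha (by
        have := hinj i (Finset.mem_cons_of_mem hi) a (Finset.mem_cons_self a s) hfi
        rwa [← this])
    rw [Nat.squarefree_mul hcop]
    exact ⟨(hf a (Finset.mem_cons_self a s)).squarefree,
      ih (fun i hi => hf i (Finset.mem_cons_of_mem hi))
        (fun i hi j hj => hinj i (Finset.mem_cons_of_mem hi) j (Finset.mem_cons_of_mem hj))⟩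

lemma two_split {c w d v : ℕ} (h : 2 ^ c * w = 2 ^ d * v) (hw : ¬ 2 ∣ w) (hv : ¬ 2 ∣ v) :
    c = d ∧ w = v := by
  have hw0 : w ≠ 0 := by rintro rfl; exact hw ⟨0, rfl⟩
  have hv0 : v ≠ 0 := by rintro rfl; exact hv ⟨0, rfl⟩
  have key : ∀ e u : ℕ, u ≠ 0 → ¬ 2 ∣ u → (2 ^ e * u).factorization 2 = e := by
    intro e u hu0 hu
    rw [Nat.factorization_mul (pow_ne_zero e two_ne_zero) hu0]
    simp [Nat.factorization_pow, Nat.Prime.factorization Nat.prime_two, Nat.factorization_eq_zero_of_not_dvd hu]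
  have hcd : c = d := by
    have h1 : (2 ^ c * w).factorization 2 = (2 ^ d * v).factorization 2 := by rw [h]
    rwa [key c w hw0 hw, key d v hv0 hv] at h1
  subst hcd
  exact ⟨rfl, Nat.eq_of_mul_eq_mul_left (pow_pos (by norm_num) c) h⟩

/-- Lemma 2: construction of `m = 2^r t` with exactly `r` solutions of `σ(x) = m`.
Indices are 0-based: the index `⟨0, _⟩` plays the role of the paper's index `1`. -/
theorem sigma_fiber_eq (r n : ℕ) (hr : 2 ≤ r) (hn : 2 ≤ n)
    (p : Fin r → Fin n → ℕ)
    (hprime : ∀ i j, (p i j).Prime)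
    (hlarge : ∀ i j, 2 ^ r + 1 < p i j)
    (hdist : ∀ i j i' j', p i j = p i' j' → i = i' ∧ j = j')
    (q : Fin r → ℕ)
    (hq : ∀ i : Fin r, q i = ∏ j ∈ Finset.univ.filter (fun j : Fin n => j ≠ ⟨0, by omega⟩), p i j)
    (t : ℕ) (ht : t = ∏ i : Fin r, ∏ j : Fin n, p i j)
    -- (i) the numbers `2 p_{i,1} q_j − 1` (for `i = 1`, `j = 1` or `j = i`) are prime
    (hi : ∀ i j : Fin r, (i = ⟨0, by omega⟩ ∨ j = ⟨0, by omega⟩ ∨ j = i) →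
      Nat.Prime (2 * p i ⟨0, by omega⟩ * q j - 1))
    -- (ii) `σ(π^b) ∤ 2^r t` for all primes `π` and `b ≥ 2` with `σ(π^b) > 2^r`
    (hii : ∀ (π b : ℕ), π.Prime → 2 ≤ b → 2 ^ r < σ 1 (π ^ b) → ¬ (σ 1 (π ^ b) ∣ 2 ^ r * t))
    -- (iii) apart from the numbers listed in (i), all numbers `2 d₁ d₂ − 1` with
    -- `d₁ ∣ t`, `d₁ > 1`, `d₂ ∣ 2^(r-1)` are composite
    (hiii : ∀ d₁ d₂ : ℕ, d₁ ∣ t → 1 < d₁ → d₂ ∣ 2 ^ (r - 1) →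
      (∀ i j : Fin r, (i = ⟨0, by omega⟩ ∨ j = ⟨0, by omega⟩ ∨ j = i) →
        2 * d₁ * d₂ - 1 ≠ 2 * p i ⟨0, by omega⟩ * q j - 1) →
      ¬ Nat.Prime (2 * d₁ * d₂ - 1)) :
    Nat.card {x : ℕ | σ 1 x = 2 ^ r * t} = r := by
  classical
  set z0r : Fin r := ⟨0, by omega⟩ with hz0r
  set z0n : Fin n := ⟨0, by omega⟩ with hz0n
  set o1n : Fin n := ⟨1, by omega⟩ with ho1n
  -- basic facts about the primes
  have hp_odd : ∀ i j, ¬ 2 ∣ p i j := by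
    intro i j hdvd
    have h2 := (Nat.prime_dvd_prime_iff_eq Nat.prime_two (hprime i j)).1 hdvd
    have := hlarge i j
    have : (4:ℕ) ≤ 2 ^ r := by calc (4:ℕ) = 2^2 := rfl
                                   _ ≤ 2 ^ r := Nat.pow_le_pow_right (by omega) hr
    omega
  have hp_pos : ∀ i j, 0 < p i j := fun i j => (hprime i j).pos
  -- q facts
  have hq_prime_dvd : ∀ i ρ, ρ.Prime → ρ ∣ q i → ∃ jj, jj ≠ z0n ∧ ρ = p i jj := by
    intro i ρ hρ hd
    rw [hq i] at hd
    obtain ⟨jj, hjj, hdj⟩ := hρ.prime.exists_mem_finset_dvd hd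
    rw [Finset.mem_filter] at hjj
    exact ⟨jj, hjj.2, ((Nat.prime_dvd_prime_iff_eq hρ (hprime i jj)).1 hdj)⟩
  have hq_odd : ∀ i, ¬ 2 ∣ q i := by
    intro i hd
    obtain ⟨jj, _, hjj⟩ := hq_prime_dvd i 2 Nat.prime_two hd
    exact hp_odd i jj (hjj ▸ dvd_refl 2)
  have hq_pos : ∀ i, 0 < q i := by
    intro i; rw [hq i]; exact Finset.prod_pos fun j _ => hp_pos i j
  have hq_one_lt : ∀ i, 1 < q i := by
    intro i
    have hd : p i o1n ∣ q i := by
      rw [hq i]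
      exact Finset.dvd_prod_of_mem _ (by
        simp only [Finset.mem_filter, Finset.mem_univ, true_and]
        intro hcon
        have : (1:ℕ) = 0 := congrArg Fin.val hcon
        omega)
    have := Nat.le_of_dvd (hq_pos i) hd
    have := (hprime i o1n).two_le
    omega
  -- t facts
  have ht_sqf : Squarefree t := by
    have heq : t = ∏ z ∈ (Finset.univ ×ˢ Finset.univ : Finset (Fin r × Fin n)), p z.1 z.2 := by
      rw [ht, Finset.prod_product']
    rw [heq]
    exact squarefree_prod_primes _ _ (fun z _ => hprime z.1 z.2)
      (fun z _ w _ hzw => Prod.ext (hdist _ _ _ _ hzw).1 (hdist _ _ _ _ hzw).2)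
  have ht_prime_dvd : ∀ ρ, ρ.Prime → ρ ∣ t → ∃ i j, ρ = p i j := by
    intro ρ hρ hd
    rw [ht] at hd
    obtain ⟨i, _, hdi⟩ := hρ.prime.exists_mem_finset_dvd hd
    obtain ⟨j, _, hdj⟩ := hρ.prime.exists_mem_finset_dvd hdi
    exact ⟨i, j, (Nat.prime_dvd_prime_iff_eq hρ (hprime i j)).1 hdj⟩
  have ht_odd : ¬ 2 ∣ t := by
    intro hd
    obtain ⟨i, j, hij⟩ := ht_prime_dvd 2 Nat.prime_two hd
    exact hp_odd i j (hij ▸ dvd_refl 2)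
  have ht_pos : 0 < t := by
    rw [ht]; exact Finset.prod_pos fun i _ => Finset.prod_pos fun j _ => hp_pos i j
  have ht' : t = ∏ i : Fin r, (p i z0n * q i) := by
    rw [ht]
    apply Finset.prod_congr rfl
    intro i _
    rw [hq i, Finset.filter_ne', ← Finset.mul_prod_erase Finset.univ _ (Finset.mem_univ z0n)]
  -- blocks are odd
  have hblock_odd : ∀ i j, ¬ 2 ∣ p i z0n * q j := by
    intro i j hd
    rcases (Nat.Prime.dvd_mul Nat.prime_two).1 hd with h | h
    exacts [hp_odd i z0n h, hq_odd j h]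
  have hblock_pos : ∀ i j, 0 < p i z0n * q j :=
    fun i j => Nat.mul_pos (hp_pos i z0n) (hq_pos j)
  -- the listed numbers
  have hL1 : ∀ i j : Fin r, 2 * p i z0n * q j - 1 + 1 = 2 * (p i z0n * q j) := by
    intro i j
    have := hblock_pos i j
    have h2 : 2 * p i z0n * q j = 2 * (p i z0n * q j) := by ring
    omega
  have hLinj : ∀ i j i' j' : Fin r,
      2 * p i z0n * q j - 1 = 2 * p i' z0n * q j' - 1 → i = i' ∧ j = j' := by
    intro i j i' j' h
    have h1 : 2 * (p i z0n * q j) = 2 * (p i' z0n * q j') := by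
      have := hL1 i j; have := hL1 i' j'; omega
    have hb : p i z0n * q j = p i' z0n * q j' := by omega
    have hii' : i = i' := by
      have hd : p i z0n ∣ p i' z0n * q j' := hb ▸ Dvd.intro _ rfl
      rcases (Nat.Prime.dvd_mul (hprime i z0n)).1 hd with h' | h'
      · exact (hdist _ _ _ _ ((Nat.prime_dvd_prime_iff_eq (hprime i z0n) (hprime i' z0n)).1 h')).1
      · obtain ⟨jj, hjj, hjje⟩ := hq_prime_dvd j' _ (hprime i z0n) h'
        exact absurd (hdist _ _ _ _ hjje).2.symm hjj
    subst hii'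
    have hq' : q j = q j' := Nat.eq_of_mul_eq_mul_left (hp_pos i z0n) hb
    have hd : p j o1n ∣ q j' := by
      rw [← hq']
      rw [hq j]
      exact Finset.dvd_prod_of_mem _ (by
        simp only [Finset.mem_filter, Finset.mem_univ, true_and]
        intro hcon
        have : (1:ℕ) = 0 := congrArg Fin.val hcon
        omega)
    obtain ⟨jj, _, hjje⟩ := hq_prime_dvd j' _ (hprime j o1n) hd
    exact ⟨rfl, (hdist _ _ _ _ hjje).1⟩
  -- the special solutions
  set L : Fin r → Fin r → ℕ := fun i j => 2 * p i z0n * q j - 1 with hLdef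
  set X : Fin r → ℕ := fun k => ∏ j : Fin r, L (Equiv.swap z0r k j) j with hXdef
  have hcond_swap : ∀ k j : Fin r,
      (Equiv.swap z0r k j = z0r ∨ j = z0r ∨ j = Equiv.swap z0r k j) := by
    intro k j
    by_cases hj0 : j = z0r
    · exact Or.inr (Or.inl hj0)
    by_cases hjk : j = k
    · subst hjk; exact Or.inl (Equiv.swap_apply_right z0r j)
    · exact Or.inr (Or.inr (Equiv.swap_apply_of_ne_of_ne hj0 hjk).symm)
  have hXprime : ∀ k j : Fin r, (L (Equiv.swap z0r k j) j).Prime :=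
    fun k j => hi _ _ (hcond_swap k j)
  have hXsol : ∀ k, σ 1 (X k) = 2 ^ r * t := by
    intro k
    rw [hXdef]
    rw [sigma_prod_primes _ _ (fun j _ => hXprime k j)
      (fun j _ j' _ hjj => (hLinj _ _ _ _ hjj).2)]
    have hL1' : ∀ j : Fin r, L (Equiv.swap z0r k j) j + 1
        = 2 * (p (Equiv.swap z0r k j) z0n * q j) := fun j => hL1 _ _
    rw [Finset.prod_congr rfl (fun j _ => hL1' j), Finset.prod_mul_distrib,
      Finset.prod_const, Finset.card_univ, Fintype.card_fin]
    congr 1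
    rw [Finset.prod_mul_distrib, Equiv.prod_comp (Equiv.swap z0r k) (fun i => p i z0n),
      ht', ← Finset.prod_mul_distrib]
  have hXinj : Function.Injective X := by
    intro k k' hkk
    have hmem : L k z0r ∣ X k := by
      rw [hXdef]
      have : L (Equiv.swap z0r k z0r) z0r = L k z0r := by rw [Equiv.swap_apply_left]
      exact this ▸ Finset.dvd_prod_of_mem _ (Finset.mem_univ z0r)
    rw [hkk] at hmem
    obtain ⟨j, _, hdj⟩ := (hi k z0r (Or.inr (Or.inl rfl))).prime.exists_mem_finset_dvd hmem
    have heq := (Nat.prime_dvd_prime_iff_eq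
      (hi k z0r (Or.inr (Or.inl rfl))) (hXprime k' j)).1 hdj
    obtain ⟨h1, h2⟩ := hLinj _ _ _ _ heq
    rw [← h2, Equiv.swap_apply_left] at h1
    exact h1
  -- odd/even split data
  set v : ℕ → ℕ := fun w => (w + 1).factorization 2 with hvdef
  set u : ℕ → ℕ := fun w => (w + 1) / 2 ^ ((w + 1).factorization 2) with hudef
  have hvu : ∀ w : ℕ, 2 ^ v w * u w = w + 1 :=
    fun w => Nat.ordProj_mul_ordCompl_eq_self (w + 1) 2
  have hu_odd : ∀ w : ℕ, ¬ 2 ∣ u w :=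
    fun w => Nat.not_dvd_ordCompl Nat.prime_two (Nat.succ_ne_zero w)
  -- the converse direction
  have hconv : ∀ x : ℕ, σ 1 x = 2 ^ r * t → ∃ k, x = X k := by
    intro x hx
    have hx0 : x ≠ 0 := by
      rintro rfl
      rw [ArithmeticFunction.map_zero] at hx
      have : 0 < 2 ^ r * t := Nat.mul_pos (Nat.pow_pos (by norm_num)) ht_pos
      omega
    -- x is squarefree
    have hsq : Squarefree x := by
      rw [Nat.squarefree_iff_prime_squarefree]
      intro π hπ hd
      set b : ℕ := x.factorization π with hbdef
      have hb : 2 ≤ b := by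
        apply (Nat.Prime.pow_dvd_iff_le_factorization hπ hx0).1
        rwa [pow_two]
      have hdecomp : π ^ b * (x / π ^ b) = x := Nat.ordProj_mul_ordCompl_eq_self x π
      have hcop : Nat.Coprime (π ^ b) (x / π ^ b) :=
        Nat.Coprime.pow_left _ (Nat.coprime_ordCompl hπ hx0)
      have hsdvd : σ 1 (π ^ b) ∣ 2 ^ r * t := by
        have hmm : σ 1 (π ^ b * (x / π ^ b)) = σ 1 (π ^ b) * σ 1 (x / π ^ b) :=
          isMultiplicative_sigma.map_mul_of_coprime hcop
        rw [hdecomp, hx] at hmm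
        exact ⟨σ 1 (x / π ^ b), hmm⟩
      rcases le_or_gt (σ 1 (π ^ b)) (2 ^ r) with hle | hgt
      · -- σ(π^b) is a power of two : contradiction with Nagell lemma
        have hs0 : σ 1 (π ^ b) ≠ 0 := by
          intro h0
          rw [h0] at hsdvd
          have := Nat.eq_zero_of_zero_dvd hsdvd
          have : 0 < 2 ^ r * t := Nat.mul_pos (Nat.pow_pos (by norm_num)) ht_pos
          omega
        set w : ℕ := σ 1 (π ^ b) / 2 ^ ((σ 1 (π ^ b)).factorization 2) with hwdef
        have hw : 2 ^ ((σ 1 (π ^ b)).factorization 2) * w = σ 1 (π ^ b) :=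
          Nat.ordProj_mul_ordCompl_eq_self _ 2
        have hw_odd : ¬ 2 ∣ w := Nat.not_dvd_ordCompl Nat.prime_two hs0
        have hwt : w ∣ t := by
          have h1 : w ∣ 2 ^ r * t := dvd_trans (Dvd.intro_left _ hw) hsdvd
          have hcop2 : Nat.Coprime w (2 ^ r) :=
            Nat.Coprime.pow_right _ (((Nat.Prime.coprime_iff_not_dvd Nat.prime_two).2 hw_odd).symm)
          exact hcop2.dvd_of_dvd_mul_left h1
        have hw1 : w = 1 := by
          by_contra hw1
          have hw_pos : 0 < w := Nat.pos_of_ne_zero (by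
            intro h0; rw [h0] at hw_odd; exact hw_odd (dvd_zero 2))
          obtain ⟨ρ, hρ, hρd⟩ := Nat.exists_prime_and_dvd (by omega : w ≠ 1)
          obtain ⟨i, j, hij⟩ := ht_prime_dvd ρ hρ (hρd.trans hwt)
          have h1 : ρ ≤ w := Nat.le_of_dvd hw_pos hρd
          have h2 : w ≤ σ 1 (π ^ b) := Nat.le_of_dvd (by omega) (Dvd.intro_left _ hw)
          have := hlarge i j
          omega
        rw [hw1, mul_one] at hw
        exact sigma_pow_ne_two_pow hπ hb hw.symm
      · exact hii π b hπ hb hgt hsdvd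
    -- structure of the prime factors
    set F : Finset ℕ := x.primeFactors with hFdef
    have hFprime : ∀ π ∈ F, π.Prime := fun π hπ => Nat.prime_of_mem_primeFactors hπ
    have hxF : x = ∏ π ∈ F, π := (Nat.prod_primeFactors_of_squarefree hsq).symm
    have hprodF : ∏ π ∈ F, (π + 1) = 2 ^ r * t := by
      rw [← hx, hxF, sigma_prod_primes _ _ (fun π hπ => hFprime π hπ)
        (fun π _ π' _ h => h)]
    have hπ1dvd : ∀ π ∈ F, π + 1 ∣ 2 ^ r * t := by
      intro π hπ
      rw [← hprodF]
      exact Finset.dvd_prod_of_mem _ hπ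
    have hπ_odd : ∀ π ∈ F, ¬ 2 ∣ π := by
      intro π hπ h2
      have h2' := (Nat.prime_dvd_prime_iff_eq Nat.prime_two (hFprime π hπ)).1 h2
      have h3 : (3:ℕ) ∣ 2 ^ r * t := by
        have h4 := hπ1dvd π hπ
        rw [← h2'] at h4
        exact h4
      have hcop3 : Nat.Coprime (2 ^ r) 3 := Nat.Coprime.pow_left _ (by norm_num)
      have h3t : (3:ℕ) ∣ t := hcop3.symm.dvd_of_dvd_mul_left h3
      obtain ⟨i, j, hij⟩ := ht_prime_dvd 3 (by norm_num) h3t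
      have := hlarge i j
      have : (4:ℕ) ≤ 2 ^ r := by calc (4:ℕ) = 2^2 := rfl
                                     _ ≤ 2 ^ r := Nat.pow_le_pow_right (by omega) hr
      omega
    have hv_pos : ∀ π ∈ F, 1 ≤ v π := by
      intro π hπ
      have h2 : 2 ∣ π + 1 := by
        have := hπ_odd π hπ
        omega
      exact (Nat.Prime.factorization_pos_of_dvd Nat.prime_two (Nat.succ_ne_zero π) h2)
    -- each prime factor is listed or Mersenne-like
    have hAB : ∀ π ∈ F, (∃ i j : Fin r, (i = z0r ∨ j = z0r ∨ j = i) ∧ π = L i j ∧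
        u π = p i z0n * q j ∧ v π = 1) ∨ u π = 1 := by
      intro π hπ
      have hut : u π ∣ t := by
        have h1 : u π ∣ 2 ^ r * t := dvd_trans (Dvd.intro_left _ (hvu π)) (hπ1dvd π hπ)
        have hcop2 : Nat.Coprime (u π) (2 ^ r) :=
          Nat.Coprime.pow_right _ (((Nat.Prime.coprime_iff_not_dvd Nat.prime_two).2
            (hu_odd π)).symm)
        exact hcop2.dvd_of_dvd_mul_left h1
      by_cases hu1 : u π = 1
      · exact Or.inr hu1
      left
      have hu_lt : 1 < u π := by
        have : u π ≠ 0 := by rintro h0; exact hu_odd π (h0 ▸ ⟨0, rfl⟩)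
        omega
      have hvr : v π ≤ r := by
        have h1 : 2 ^ v π ∣ 2 ^ r * t := dvd_trans (Dvd.intro _ (hvu π)) (hπ1dvd π hπ)
        have hcop2 : Nat.Coprime (2 ^ v π) t :=
          Nat.Coprime.pow_left _ ((Nat.Prime.coprime_iff_not_dvd Nat.prime_two).2 ht_odd)
        have h2 : 2 ^ v π ∣ 2 ^ r := hcop2.dvd_of_dvd_mul_right h1
        exact (Nat.pow_dvd_pow_iff_le_right (by norm_num)).1 h2
      have hd2 : (2:ℕ) ^ (v π - 1) ∣ 2 ^ (r - 1) := pow_dvd_pow 2 (by omega)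
      have harith : 2 * u π * 2 ^ (v π - 1) = 2 ^ v π * u π := by
        have hv1 := hv_pos π hπ
        have h2 : 2 * 2 ^ (v π - 1) = 2 ^ v π := by
          rw [← _root_.pow_succ']
          congr 1
          omega
        calc 2 * u π * 2 ^ (v π - 1) = u π * (2 * 2 ^ (v π - 1)) := by ring
        _ = 2 ^ v π * u π := by rw [h2]; ring
      have hπeq : 2 * u π * 2 ^ (v π - 1) - 1 = π := by
        rw [harith]
        have := hvu π
        omega
      have hprimeπ : Nat.Prime (2 * u π * 2 ^ (v π - 1) - 1) := by
        rw [hπeq]; exact hFprime π hπ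
      have := hiii (u π) (2 ^ (v π - 1)) hut hu_lt hd2
      by_contra hcon
      push_neg at hcon
      have hlist : ¬ (∀ i j : Fin r, (i = z0r ∨ j = z0r ∨ j = i) →
          2 * u π * 2 ^ (v π - 1) - 1 ≠ 2 * p i z0n * q j - 1) := by
        intro hall
        exact (this hall) hprimeπ
      push_neg at hlist
      obtain ⟨i, j, hcnd, heq⟩ := hlist
      have hπL : π = 2 * p i z0n * q j - 1 := by rw [← hπeq, heq]
      have h21 : 2 ^ v π * u π = 2 ^ 1 * (p i z0n * q j) := by
        rw [hvu π, hπL]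
        have := hL1 i j
        omega
      obtain ⟨hv1', hu'⟩ := two_split h21 (hu_odd π) (hblock_odd i j)
      exact hcon i j hcnd hπL hu' hv1'
    -- split the product into powers of two and odd parts
    have hsplit : 2 ^ (∑ π ∈ F, v π) * ∏ π ∈ F, u π = 2 ^ r * t := by
      rw [← hprodF, ← Finset.prod_pow_eq_pow_sum, ← Finset.prod_mul_distrib]
      exact Finset.prod_congr rfl fun π _ => hvu π
    have hprodu_odd : ¬ 2 ∣ ∏ π ∈ F, u π := by
      intro hd
      obtain ⟨π, _, hdπ⟩ := Nat.prime_two.prime.exists_mem_finset_dvd hd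
      exact hu_odd π hdπ
    obtain ⟨hsumv, hprodu⟩ := two_split hsplit hprodu_odd ht_odd
    have hcardF : F.card ≤ r := by
      calc F.card = ∑ _π ∈ F, 1 := by rw [Finset.card_eq_sum_ones]
      _ ≤ ∑ π ∈ F, v π := Finset.sum_le_sum hv_pos
      _ = r := hsumv
    -- every column index is hit
    have hsurj : ∀ j' : Fin r, ∃ π, π ∈ F ∧ ∃ i : Fin r,
        (i = z0r ∨ j' = z0r ∨ j' = i) ∧ π = L i j' ∧ u π = p i z0n * q j' := by
      intro j'
      have hρt : p j' o1n ∣ t := by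
        rw [ht]
        exact dvd_trans (Finset.dvd_prod_of_mem _ (Finset.mem_univ o1n))
          (Finset.dvd_prod_of_mem _ (Finset.mem_univ j'))
      rw [← hprodu] at hρt
      obtain ⟨π, hπF, hdπ⟩ := (hprime j' o1n).prime.exists_mem_finset_dvd hρt
      rcases hAB π hπF with ⟨i, j, hcnd, hπL, hu', _⟩ | hu1
      · rw [hu'] at hdπ
        have hjj' : j = j' := by
          rcases (Nat.Prime.dvd_mul (hprime j' o1n)).1 hdπ with h' | h'
          · have h2 := (hdist _ _ _ _ ((Nat.prime_dvd_prime_iff_eq (hprime j' o1n)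
              (hprime i z0n)).1 h')).2
            have : (1:ℕ) = 0 := congrArg Fin.val h2
            omega
          · obtain ⟨jj, hjj, hjje⟩ := hq_prime_dvd j _ (hprime j' o1n) h'
            exact ((hdist _ _ _ _ hjje).1).symm
        subst hjj'
        exact ⟨π, hπF, i, hcnd, hπL, hu'⟩
      · rw [hu1] at hdπ
        have := Nat.le_of_dvd one_pos hdπ
        have := (hprime j' o1n).two_le
        omega
    choose PP hPPF I hcnd hPPL hPPu using hsurj
    have hPPinj : Function.Injective PP := by
      intro j1 j2 h12
      have h := (hPPL j1).symm.trans (h12.trans (hPPL j2))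
      exact (hLinj _ _ _ _ h).2
    have himgsub : Finset.image PP Finset.univ ⊆ F := by
      intro w hw
      obtain ⟨j', _, rfl⟩ := Finset.mem_image.1 hw
      exact hPPF j'
    have hcardimg : (Finset.image PP Finset.univ).card = r := by
      rw [Finset.card_image_of_injective _ hPPinj, Finset.card_univ, Fintype.card_fin]
    have hFimg : Finset.image PP Finset.univ = F :=
      Finset.eq_of_subset_of_card_le himgsub (by rw [hcardimg]; exact hcardF)
    -- I is injective, hence a bijection
    have hIinj : Function.Injective I := by
      intro j1 j2 h12
      by_contra hne
      have hPPne : PP j1 ≠ PP j2 := fun h => hne (hPPinj h)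
      have hd1 : p (I j1) z0n ∣ u (PP j1) := by rw [hPPu j1]; exact dvd_mul_right _ _
      have hd2 : p (I j1) z0n ∣ u (PP j2) := by rw [hPPu j2, ← h12]; exact dvd_mul_right _ _
      have hsq2 : p (I j1) z0n * p (I j1) z0n ∣ t := by
        rw [← hprodu]
        have hm1 : PP j1 ∈ F := hPPF j1
        have hm2 : PP j2 ∈ F.erase (PP j1) := Finset.mem_erase.2 ⟨hPPne.symm, hPPF j2⟩
        calc p (I j1) z0n * p (I j1) z0n ∣ u (PP j1) * u (PP j2) := mul_dvd_mul hd1 hd2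
        _ ∣ u (PP j1) * ∏ π ∈ F.erase (PP j1), u π :=
            mul_dvd_mul_left _ (Finset.dvd_prod_of_mem _ hm2)
        _ = ∏ π ∈ F, u π := Finset.mul_prod_erase F u hm1
      exact (hprime (I j1) z0n).not_isUnit (ht_sqf _ hsq2)
    -- I is the swap with k = I z0r
    refine ⟨I z0r, ?_⟩
    have hIswap : ∀ j', I j' = Equiv.swap z0r (I z0r) j' := by
      intro j'
      by_cases hj0 : j' = z0r
      · rw [hj0, Equiv.swap_apply_left]
      rcases hcnd j' with hI0 | hj0' | hjI
      · have hkz : I z0r ≠ z0r := by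
          intro hkz
          exact hj0 (hIinj (hI0.trans hkz.symm))
        have hjk : j' = I z0r := by
          rcases hcnd (I z0r) with h1 | h2 | h3
          · exact hIinj (hI0.trans h1.symm)
          · exact absurd h2 hkz
          · exact absurd (hIinj h3).symm hkz
        rw [hjk, Equiv.swap_apply_right, ← hjk, hI0]
      · exact absurd hj0' hj0
      · have hjk : j' ≠ I z0r := by
          intro hjk
          exact hj0 (hIinj (hjI.symm.trans hjk))
        rw [Equiv.swap_apply_of_ne_of_ne hj0 hjk, ← hjI]
    rw [hxF, ← hFimg, Finset.prod_image (fun a _ b _ h => hPPinj h)]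
    apply Finset.prod_congr rfl
    intro j' _
    rw [hPPL j', hIswap j']
  -- final count
  have hset : {x : ℕ | σ 1 x = 2 ^ r * t} = Set.range X := by
    ext x
    constructor
    · intro hx
      obtain ⟨k, hk⟩ := hconv x hx
      exact ⟨k, hk.symm⟩
    · rintro ⟨k, rfl⟩
      exact hXsol k
  rw [hset, Nat.card_range_of_injective hXinj]
  simp
end

section
/- For every real β > 0 there exists a constant C(β) such that for all real x ≥ 1, ∑_{k ≤ x} (k/φ(k))^β ≤ C(β)·x. -/
/-!
Since `k / φ k = ∏_{p ∣ k} p / φ p`, the summand is `∏_{p ∣ k} (1 + g p)` with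
`g p = (p / (p - 1)) ^ β - 1 ≤ 2 β e^β / p`. Expanding the product over sets `t` of primes and
counting the multiples of `∏ t` up to `x` gives
`∑_{k ≤ x} (k / φ k) ^ β ≤ x ∏_{p ≤ x} (1 + g p / p) ≤ x exp (∑_p g p / p)`,
and `∑_p g p / p ≤ 2 β e^β ∑_p p⁻² ≤ 2 β e^β`.
-/

open Nat Finset Real

theorem exp_sub_one_le_mul_exp (s : ℝ) : exp s - 1 ≤ s * exp s := by
  have h := add_one_le_exp (-s)
  rw [exp_neg] at h
  have := exp_pos s
  field_simp at h
  linarith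

theorem one_add_rpow_le_exp_mul {t : ℝ} (ht : -1 < t) {β : ℝ} (hβ : 0 ≤ β) :
    (1 + t) ^ β ≤ exp (β * t) := by
  rw [rpow_def_of_pos (by linarith), mul_comm]
  gcongr
  linarith [log_le_sub_one_of_pos (by linarith : 0 < 1 + t)]

theorem one_add_rpow_sub_one_le {t : ℝ} (ht₀ : 0 ≤ t) (ht₁ : t ≤ 1) {β : ℝ} (hβ : 0 ≤ β) :
    (1 + t) ^ β - 1 ≤ β * exp β * t := calc
  (1 + t) ^ β - 1 ≤ exp (β * t) - 1 := by gcongr; exact one_add_rpow_le_exp_mul (by linarith) hβ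
  _ ≤ β * t * exp (β * t) := exp_sub_one_le_mul_exp _
  _ ≤ β * t * exp β := by gcongr; nlinarith
  _ = β * exp β * t := by ring

theorem sum_primesLE_inv_sq_le_one (n : ℕ) : ∑ p ∈ primesLE n, ((p : ℝ) ^ 2)⁻¹ ≤ 1 := by
  have hsub : primesLE n ⊆ Ioo 1 (n + 1) := fun p hp =>
    mem_Ioo.2 ⟨one_lt_of_mem_primesLE hp, Nat.lt_succ_of_le (le_of_mem_primesLE hp)⟩
  calc ∑ p ∈ primesLE n, ((p : ℝ) ^ 2)⁻¹ ≤ ∑ i ∈ Ioo 1 (n + 1), ((i : ℝ) ^ 2)⁻¹ :=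
        sum_le_sum_of_subset_of_nonneg hsub fun _ _ _ => by positivity
    _ ≤ 2 / ((1 : ℕ) + 1) := sum_Ioo_inv_sq_le 1 (n + 1)
    _ = 1 := by norm_num

theorem one_le_div_totient {n : ℕ} (hn : n ≠ 0) : 1 ≤ (n : ℝ) / φ n :=
  (one_le_div (by exact_mod_cast totient_pos.2 (pos_of_ne_zero hn))).2
    (by exact_mod_cast totient_le n)

theorem div_totient_eq_prod_primeFactors {k : ℕ} (hk : k ≠ 0) :
    (k : ℝ) / φ k = ∏ p ∈ k.primeFactors, (p : ℝ) / φ p := by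
  have hφ := congrArg (Rat.cast : ℚ → ℝ) (totient_eq_mul_prod_factors k)
  push_cast at hφ
  rw [hφ, div_mul_cancel_left₀ (by exact_mod_cast hk), ← prod_inv_distrib]
  refine prod_congr rfl fun p hp => ?_
  have hp := prime_of_mem_primeFactors hp
  have hp1 : (1 : ℝ) < p := by exact_mod_cast hp.one_lt
  rw [totient_prime hp, cast_pred hp.pos]
  field_simp [(by linarith : (p : ℝ) - 1 ≠ 0)]

theorem rpow_div_totient_eq_prod_primeFactors (β : ℝ) {k : ℕ} (hk : k ≠ 0) :
    ((k : ℝ) / φ k) ^ β = ∏ p ∈ k.primeFactors, ((p : ℝ) / φ p) ^ β := by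
  rw [div_totient_eq_prod_primeFactors hk, finsetProd_rpow _ _ fun p _ => by positivity]

theorem rpow_div_totient_sub_one_le {p : ℕ} (hp : p.Prime) {β : ℝ} (hβ : 0 ≤ β) :
    ((p : ℝ) / φ p) ^ β - 1 ≤ 2 * β * exp β / p := by
  have h2 : (2 : ℝ) ≤ p := by exact_mod_cast hp.two_le
  have hφ : (p : ℝ) / φ p = 1 + 1 / (p - 1) := by
    rw [totient_prime hp, cast_pred hp.pos]
    field_simp [show (p : ℝ) - 1 ≠ 0 by linarith]
    ring
  have ht : 1 / ((p : ℝ) - 1) ≤ 2 / p := by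
    rw [div_le_div_iff₀ (by linarith) (by linarith)]; linarith
  calc ((p : ℝ) / φ p) ^ β - 1 ≤ β * exp β * (1 / (p - 1)) := by
        rw [hφ]
        exact one_add_rpow_sub_one_le (div_nonneg zero_le_one (by linarith))
          (by rw [div_le_one] <;> linarith) hβ
    _ ≤ β * exp β * (2 / p) := by gcongr
    _ = 2 * β * exp β / p := by ring

theorem sum_primesLE_rpow_div_totient_sub_one_div_le {β : ℝ} (hβ : 0 ≤ β) (n : ℕ) :
    ∑ p ∈ primesLE n, (((p : ℝ) / φ p) ^ β - 1) / p ≤ 2 * β * exp β := calc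
  ∑ p ∈ primesLE n, (((p : ℝ) / φ p) ^ β - 1) / p
      ≤ ∑ p ∈ primesLE n, 2 * β * exp β * ((p : ℝ) ^ 2)⁻¹ := by
        refine sum_le_sum fun p hp => ?_
        have hp0 : (0 : ℝ) < p := by exact_mod_cast (prime_of_mem_primesLE hp).pos
        calc (((p : ℝ) / φ p) ^ β - 1) / p ≤ 2 * β * exp β / p / p := by
              gcongr; exact rpow_div_totient_sub_one_le (prime_of_mem_primesLE hp) hβ
          _ = 2 * β * exp β * ((p : ℝ) ^ 2)⁻¹ := by ring
  _ = 2 * β * exp β * ∑ p ∈ primesLE n, ((p : ℝ) ^ 2)⁻¹ := (mul_sum ..).symm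
  _ ≤ 2 * β * exp β := mul_le_of_le_one_right (by positivity) (sum_primesLE_inv_sq_le_one n)

theorem prod_dvd_iff_subset_primeFactors {t : Finset ℕ} (ht : ∀ p ∈ t, p.Prime) {k : ℕ}
    (hk : k ≠ 0) : ∏ p ∈ t, p ∣ k ↔ t ⊆ k.primeFactors := by
  simpa only [primeFactors_prod ht] using prod_primeFactors_dvd_iff (n := ∏ p ∈ t, p) hk

theorem primeFactors_subset_primesLE {k n : ℕ} (hkn : k ≤ n) :
    k.primeFactors ⊆ primesLE n := fun _ hp =>
  mem_primesLE.2 ⟨(le_of_mem_primeFactors hp).trans hkn, prime_of_mem_primeFactors hp⟩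

theorem prod_primeFactors_one_add_eq_sum {R : Type*} [CommSemiring R] (g : ℕ → R)
    {P : Finset ℕ} (hP : ∀ p ∈ P, p.Prime) {k : ℕ} (hk : k ≠ 0) (hkP : k.primeFactors ⊆ P) :
    ∏ p ∈ k.primeFactors, (1 + g p) = ∑ t ∈ P.powerset with ∏ p ∈ t, p ∣ k, ∏ p ∈ t, g p := by
  rw [prod_one_add]
  congr 1
  ext t
  rw [mem_filter, mem_powerset, mem_powerset]
  refine ⟨fun htk => ⟨htk.trans hkP, ?_⟩, fun ⟨htP, hdvd⟩ => ?_⟩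
  · exact (prod_dvd_iff_subset_primeFactors (fun p hp => hP p (hkP (htk hp))) hk).2 htk
  · exact (prod_dvd_iff_subset_primeFactors (fun p hp => hP p (htP hp)) hk).1 hdvd

theorem sum_Icc_prod_primeFactors_one_add {R : Type*} [CommSemiring R] (g : ℕ → R) (n : ℕ) :
    ∑ k ∈ Icc 1 n, ∏ p ∈ k.primeFactors, (1 + g p) =
      ∑ t ∈ (primesLE n).powerset, (n / ∏ p ∈ t, p : ℕ) • ∏ p ∈ t, g p := by
  have hP : ∀ p ∈ primesLE n, p.Prime := fun _ => prime_of_mem_primesLE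
  calc ∑ k ∈ Icc 1 n, ∏ p ∈ k.primeFactors, (1 + g p)
      = ∑ k ∈ Icc 1 n, ∑ t ∈ (primesLE n).powerset with ∏ p ∈ t, p ∣ k, ∏ p ∈ t, g p := by
        refine sum_congr rfl fun k hk => ?_
        obtain ⟨hk1, hkn⟩ := mem_Icc.1 hk
        exact prod_primeFactors_one_add_eq_sum g hP (by omega)
          (primeFactors_subset_primesLE hkn)
    _ = ∑ t ∈ (primesLE n).powerset, ∑ k ∈ Icc 1 n with ∏ p ∈ t, p ∣ k, ∏ p ∈ t, g p := by
        simp only [sum_filter]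
        exact sum_comm
    _ = _ := by
        refine sum_congr rfl fun t _ => ?_
        rw [sum_const, ← Ioc_filter_dvd_card_eq_div]
        rfl

theorem sum_Icc_prod_primeFactors_le {f : ℕ → ℝ} (hf : ∀ p, p.Prime → 1 ≤ f p) (n : ℕ) :
    ∑ k ∈ Icc 1 n, ∏ p ∈ k.primeFactors, f p ≤ n * ∏ p ∈ primesLE n, (1 + (f p - 1) / p) := by
  have hexpand := sum_Icc_prod_primeFactors_one_add (fun p => f p - 1) n
  simp only [add_sub_cancel] at hexpand
  rw [hexpand, prod_one_add, mul_sum]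
  simp only [nsmul_eq_mul]
  refine sum_le_sum fun t ht => ?_
  have htP : ∀ p ∈ t, p.Prime := fun p hp => prime_of_mem_primesLE (mem_powerset.1 ht hp)
  calc ((n / ∏ p ∈ t, p : ℕ) : ℝ) * ∏ p ∈ t, (f p - 1)
      ≤ n / (∏ p ∈ t, (p : ℝ)) * ∏ p ∈ t, (f p - 1) := by
        gcongr
        · exact prod_nonneg fun p hp => sub_nonneg.2 (hf p (htP p hp))
        · rw [← Nat.cast_prod]
          exact Nat.cast_div_le
    _ = n * ∏ p ∈ t, (f p - 1) / p := by rw [prod_div_distrib]; ring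

theorem sum_Icc_prod_primeFactors_le_exp {f : ℕ → ℝ} (hf : ∀ p, p.Prime → 1 ≤ f p) (n : ℕ) :
    ∑ k ∈ Icc 1 n, ∏ p ∈ k.primeFactors, f p ≤ n * exp (∑ p ∈ primesLE n, (f p - 1) / p) := by
  refine (sum_Icc_prod_primeFactors_le hf n).trans ?_
  rw [exp_sum]
  gcongr
  · intro p hp
    have := hf p (prime_of_mem_primesLE hp)
    positivity
  · exact (add_comm _ _).trans_le (add_one_le_exp _)

/-- Lemma 5: for every `β > 0` there is `C(β)` with `∑_{k ≤ x} (k/φ(k))^β ≤ C(β) x`. -/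
theorem sum_div_totient_pow_le (β : ℝ) (hβ : 0 < β) :
    ∃ C : ℝ, ∀ x : ℝ, 1 ≤ x →
      ∑ k ∈ Finset.Icc 1 ⌊x⌋₊, ((k : ℝ) / (Nat.totient k : ℝ)) ^ β ≤ C * x := by
  refine ⟨exp (2 * β * exp β), fun x hx => ?_⟩
  have hn : (⌊x⌋₊ : ℝ) ≤ x := floor_le (by linarith)
  calc ∑ k ∈ Icc 1 ⌊x⌋₊, ((k : ℝ) / φ k) ^ β
      = ∑ k ∈ Icc 1 ⌊x⌋₊, ∏ p ∈ k.primeFactors, ((p : ℝ) / φ p) ^ β :=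
        sum_congr rfl fun k hk =>
          rpow_div_totient_eq_prod_primeFactors β (by have := (mem_Icc.1 hk).1; omega)
    _ ≤ ⌊x⌋₊ * exp (∑ p ∈ primesLE ⌊x⌋₊, (((p : ℝ) / φ p) ^ β - 1) / p) :=
        sum_Icc_prod_primeFactors_le_exp
          (fun p hp => one_le_rpow (one_le_div_totient hp.ne_zero) hβ.le) _
    _ ≤ x * exp (2 * β * exp β) := by
        gcongr
        exact sum_primesLE_rpow_div_totient_sub_one_div_le hβ.le _
    _ = exp (2 * β * exp β) * x := mul_comm _ _
end

section
/- If p is a prime with p > 2^r·m + 1 and p − 1 divides 2^r·t·m, where t is a product of primes each greater than 2^r·m + 1 and p does not divide t, and moreover for all divisors d₁ | t with d₁ > 1 and d₂ | 2^{r−1}·m the number 2·d₁·d₂ + 1 is composite, then a contradiction arises; equivalently, no such prime p can divide a solution x of φ(x) = 2^r·t·m unless p divides t. -/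
/-- Key step of Lemma 1: no prime `p > 2^r m + 1` with `p ∤ t` can satisfy
`p − 1 ∣ 2^r t m` when all numbers `2 d₁ d₂ + 1` (`d₁ ∣ t`, `d₁ > 1`, `d₂ ∣ 2^(r-1) m`)
are composite. -/
theorem no_extraneous_prime (r m t p : ℕ) (hr : 2 ≤ r) (hm : 1 ≤ m)
    (ht : Squarefree t)
    (htfac : ∀ q : ℕ, q.Prime → q ∣ t → 2 ^ r * m + 1 < q)
    (hp : p.Prime) (hplarge : 2 ^ r * m + 1 < p)
    (hpdvd : p - 1 ∣ 2 ^ r * t * m) (hpt : ¬ p ∣ t)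
    (hcomp : ∀ d₁ d₂ : ℕ, d₁ ∣ t → 1 < d₁ → d₂ ∣ 2 ^ (r - 1) * m →
      ¬ Nat.Prime (2 * d₁ * d₂ + 1)) :
    False := by
  have h4 : 4 ≤ 2 ^ r * m := by
    have : (4 : ℕ) = 2 ^ 2 * 1 := by norm_num
    rw [this]
    exact Nat.mul_le_mul (Nat.pow_le_pow_right (by norm_num) hr) hm
  have hp2 : 2 < p := by omega
  have hpm1pos : 0 < p - 1 := by omega
  -- t is odd
  have htodd : ¬ 2 ∣ t := fun h => by have := htfac 2 Nat.prime_two h; omega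
  set g := Nat.gcd (p - 1) t with hg
  have hgp : g ∣ p - 1 := Nat.gcd_dvd_left _ _
  have hgt : g ∣ t := Nat.gcd_dvd_right _ _
  have hgpos : 0 < g := Nat.gcd_pos_of_pos_left _ hpm1pos
  set s := (p - 1) / g with hsdef
  have hps : g * s = p - 1 := Nat.mul_div_cancel' hgp
  have cop : Nat.Coprime s (t / g) := Nat.coprime_div_gcd_div_gcd hgpos
  -- s divides 2^r * m
  have hsdvd : s ∣ 2 ^ r * m := by
    have h1 : g * s ∣ g * (2 ^ r * m * (t / g)) := by
      rw [hps]
      calc p - 1 ∣ 2 ^ r * t * m := hpdvd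
        _ = g * (2 ^ r * m * (t / g)) := by
            conv_lhs => rw [← Nat.mul_div_cancel' hgt]
            ring
    have h2 : s ∣ 2 ^ r * m * (t / g) :=
      (mul_dvd_mul_iff_left hgpos.ne').mp h1
    exact cop.dvd_of_dvd_mul_right h2
  -- s is even
  have hpodd : 2 ∣ p - 1 := by
    have := hp.two_le
    rcases hp.eq_two_or_odd with h | h
    · omega
    · omega
  have hgodd : ¬ 2 ∣ g := fun h => htodd (h.trans hgt)
  have hseven : 2 ∣ s := by
    rcases (Nat.Prime.dvd_mul Nat.prime_two).mp (hps ▸ hpodd) with h | h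
    · exact absurd h hgodd
    · exact h
  obtain ⟨d₂, hd₂⟩ := hseven
  -- d₂ divides 2^(r-1) * m
  have hd₂dvd : d₂ ∣ 2 ^ (r - 1) * m := by
    have h2r : 2 ^ r * m = 2 * (2 ^ (r - 1) * m) := by
      rw [← mul_assoc, ← pow_succ']
      congr 2
      omega
    have : 2 * d₂ ∣ 2 * (2 ^ (r - 1) * m) := by
      rw [← h2r, ← hd₂]; exact hsdvd
    exact (mul_dvd_mul_iff_left (two_ne_zero)).mp this
  -- g > 1
  have hg1 : 1 < g := by
    by_contra h
    have hgeq : g = 1 := by omega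
    have : s = p - 1 := by rw [← hps, hgeq, one_mul]
    have hle : p - 1 ≤ 2 ^ r * m := Nat.le_of_dvd (by omega) (this ▸ hsdvd)
    omega
  -- conclude
  have hpeq : 2 * g * d₂ + 1 = p := by
    have h1 : 2 * g * d₂ = p - 1 := by
      rw [show 2 * g * d₂ = g * (2 * d₂) by ring, ← hd₂, hps]
    rw [h1, Nat.sub_add_cancel hp.pos]
  exact hcomp g d₂ hgt hg1 hd₂dvd (hpeq ▸ hp)
end

section
/- Suppose s₁, …, s_r are distinct primes, t is a positive integer, and σ(s₁·s₂⋯s_r) = 2^r·t where t is odd and squarefree with every prime factor of t exceeding 2^r + 1. If x is a positive integer divisible by each s_i exactly once and σ(x) = 2^r·t, then x = s₁·s₂⋯s_r. -/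
open Finset ArithmeticFunction
open scoped ArithmeticFunction.sigma

/-!
Writing `x = (∏ i, s i) * m`, the condition `¬ s i ^ 2 ∣ x` makes the two factors coprime, so
multiplicativity gives `σ x = σ (∏ i, s i) * σ m`. Hence `σ m = 1`, which forces `m = 1`.
-/

namespace Nat

theorem prod_dvd_of_injective_primes {ι : Type*} [Fintype ι] {s : ι → ℕ}
    (hs : ∀ i, (s i).Prime) (hinj : Function.Injective s) {x : ℕ} (hdvd : ∀ i, s i ∣ x) :
    ∏ i, s i ∣ x := by
  classical
  have h := prod_primes_dvd (s := univ.image s) x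
    (by simpa using fun i => (hs i).prime) (by simpa using hdvd)
  rwa [prod_image fun i _ j _ hij => hinj hij] at h

theorem coprime_prod_of_not_sq_dvd_prod_mul {ι : Type*} [Fintype ι] {s : ι → ℕ}
    (hs : ∀ i, (s i).Prime) {m : ℕ} (hsq : ∀ i, ¬ s i ^ 2 ∣ (∏ j, s j) * m) :
    Coprime (∏ i, s i) m :=
  coprime_fintype_prod_left_iff.mpr fun i => (hs i).coprime_iff_not_dvd.mpr fun hdvd =>
    hsq i (sq (s i) ▸ mul_dvd_mul (dvd_prod_of_mem s (mem_univ i)) hdvd)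

theorem eq_one_of_sigma_mul_eq_sigma {k n m : ℕ} (hn : n ≠ 0) (hcop : Coprime n m)
    (hσ : σ k (n * m) = σ k n) : m = 1 := by
  rw [isMultiplicative_sigma.map_mul_of_coprime hcop] at hσ
  have hσm : σ k m = 1 := Nat.eq_of_mul_eq_mul_left (sigma_pos k n hn) (by rw [hσ, mul_one])
  exact (sigma_eq_one_iff k m).mp hσm

end Nat

theorem sigma_forces_product_general (r : ℕ) (s : Fin r → ℕ) (hs : ∀ i, (s i).Prime)
    (hinj : Function.Injective s) (t : ℕ)
    (hσ : σ 1 (∏ i, s i) = 2 ^ r * t)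
    (x : ℕ)
    (hdvd : ∀ i, s i ∣ x ∧ ¬ (s i) ^ 2 ∣ x)
    (hσx : σ 1 x = 2 ^ r * t) :
    x = ∏ i, s i := by
  obtain ⟨m, rfl⟩ := Nat.prod_dvd_of_injective_primes hs hinj fun i => (hdvd i).1
  have hcop := Nat.coprime_prod_of_not_sq_dvd_prod_mul hs fun i => (hdvd i).2
  have hprod : ∏ i, s i ≠ 0 := prod_ne_zero_iff.mpr fun i _ => (hs i).ne_zero
  rw [Nat.eq_one_of_sigma_mul_eq_sigma hprod hcop (hσx.trans hσ.symm), mul_one]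

/-- If `σ(s₁ ⋯ s_r) = 2^r t` with `t` odd and squarefree, all prime factors of `t`
exceeding `2^r + 1`, and `x` is divisible by each distinct prime `s_i` exactly once
with `σ(x) = 2^r t`, then `x = s₁ ⋯ s_r`. -/
theorem sigma_forces_product (r : ℕ) (s : Fin r → ℕ) (hs : ∀ i, (s i).Prime)
    (hinj : Function.Injective s) (t : ℕ) (ht0 : 0 < t) (htodd : Odd t)
    (htsf : Squarefree t) (htfac : ∀ q : ℕ, q.Prime → q ∣ t → 2 ^ r + 1 < q)
    (hσ : σ 1 (∏ i, s i) = 2 ^ r * t)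
    (x : ℕ) (hx : 0 < x)
    (hdvd : ∀ i, s i ∣ x ∧ ¬ (s i) ^ 2 ∣ x)
    (hσx : σ 1 x = 2 ^ r * t) :
    x = ∏ i, s i :=
  sigma_forces_product_general r s hs hinj t hσ x hdvd hσx
end
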